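/- Let a < b be real, U ⊆ ℂ open with [a,b] ⊂ U, and ν holomorphic on U. Then there exist C > 0 and δ > 0 such that for all λ ∈ ℂ∖[a,b] with 0 < |λ − b| < δ, one has | ∫_a^b (ν(μ) − ν(b))/(μ − λ) dμ | ≤ C; and similarly with the endpoint b replaced by a (subtracting ν(a)). -/

import Mathlib

/-!
Let `c` be the point of `[a, b]` nearest to `λ`, and split `ν μ - ν b = (ν μ - ν c) + (ν c - ν b)`.
Since `|μ - c| ≤ |μ - λ|` for `μ ∈ [a, b]`, the first part divided by `μ - λ` is bounded by a
Lipschitz constant `L` of `ν` on `[a, b]`. The second part integrates to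
`(ν c - ν b) (log (λ - b) - log (λ - a))`, where `|ν c - ν b| ≤ L |λ - b|` and `r |log r|` stays
bounded as `r → 0`. The endpoint `a` reduces to `b` under the reflection `μ ↦ -μ`.
-/

open Complex Set MeasureTheory intervalIntegral Filter Topology

namespace Complex

theorem norm_log_le_abs_log_norm_add_pi (z : ℂ) : ‖log z‖ ≤ |Real.log ‖z‖| + Real.pi :=
  calc ‖log z‖ ≤ |(log z).re| + |(log z).im| := norm_le_abs_re_add_abs_im _
    _ ≤ |Real.log ‖z‖| + Real.pi := by rw [log_re, log_im]; gcongr; exact abs_arg_le_pi z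

theorem norm_mul_norm_log_le {z : ℂ} (hz : ‖z‖ ≤ 1) : ‖z‖ * ‖log z‖ ≤ 1 + Real.pi := by
  rcases eq_or_ne z 0 with rfl | hz0
  · simp only [norm_zero, zero_mul]; positivity
  have hlog := (Real.abs_log_mul_self_lt ‖z‖ (norm_pos_iff.2 hz0) hz).le
  calc ‖z‖ * ‖log z‖ ≤ ‖z‖ * (|Real.log ‖z‖| + Real.pi) := by
        gcongr; exact norm_log_le_abs_log_norm_add_pi z
    _ = |Real.log ‖z‖ * ‖z‖| + ‖z‖ * Real.pi := by rw [abs_mul, abs_norm]; ring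
    _ ≤ 1 + Real.pi := by gcongr; nlinarith [Real.pi_pos]

theorem integral_inv_ofReal_sub_eq_log_sub {a b : ℝ} {lam : ℂ}
    (h : ∀ x ∈ uIcc a b, lam - x ∈ slitPlane) :
    ∫ μ : ℝ in a..b, ((μ : ℂ) - lam)⁻¹ = log (lam - b) - log (lam - a) := by
  have hne : ∀ x ∈ uIcc a b, (x : ℂ) - lam ≠ 0 := fun x hx hx0 =>
    slitPlane_ne_zero (h x hx) (by rw [← neg_sub, hx0, neg_zero])
  have hinv : ContinuousOn (fun μ : ℝ => ((μ : ℂ) - lam)⁻¹) (uIcc a b) :=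
    (continuous_ofReal.continuousOn.sub continuousOn_const).inv₀ hne
  refine integral_eq_sub_of_hasDerivAt (f := fun y : ℝ => log (lam - y)) (fun x hx => ?_)
    hinv.intervalIntegrable
  have hderiv : HasDerivAt (fun y : ℝ => lam - (y : ℂ)) (-1) x := by
    simpa using ((hasDerivAt_id x).ofReal_comp).const_sub lam
  refine (hderiv.clog_real (h x hx)).congr_deriv ?_
  rw [neg_div, ← div_neg, neg_sub, one_div]

theorem sub_ofReal_mem_slitPlane {a b : ℝ} {lam : ℂ} (ha : a < lam.re)
    (hlam : lam ∉ (fun x : ℝ => (x : ℂ)) '' Icc a b) {x : ℝ} (hx : x ≤ b) :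
    lam - x ∈ slitPlane := by
  rw [mem_slitPlane_iff]
  by_cases him : lam.im = 0
  · left
    have hb : b < lam.re := by
      by_contra! hle
      exact hlam ⟨lam.re, ⟨ha.le, hle⟩, ext rfl (by simp [him])⟩
    simp only [sub_re, ofReal_re]
    linarith
  · right; simpa using him

end Complex

theorem norm_integral_div_ofReal_sub_le {g : ℝ → ℂ} {a b L : ℝ} {lam : ℂ} (hL : 0 ≤ L)
    (hg : ∀ μ ∈ uIcc a b, ‖g μ‖ ≤ L * ‖(μ : ℂ) - lam‖) :
    ‖∫ μ in a..b, g μ / (μ - lam)‖ ≤ L * |b - a| :=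
  norm_integral_le_of_norm_le_const fun μ hμ => by
    rw [norm_div]
    exact div_le_of_le_mul₀ (norm_nonneg _) hL (hg μ (uIoc_subset_uIcc hμ))

theorem integral_sub_div_ofReal_sub_eq {f : ℝ → ℂ} {a b : ℝ} {lam : ℂ}
    (hf : ContinuousOn f (uIcc a b)) (hlam : ∀ μ ∈ uIcc a b, (μ : ℂ) - lam ≠ 0) (v w : ℂ) :
    ∫ μ in a..b, (f μ - v) / (μ - lam)
      = (∫ μ in a..b, (f μ - w) / (μ - lam)) + (w - v) * ∫ μ : ℝ in a..b, ((μ : ℂ) - lam)⁻¹ := by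
  have hinv : ContinuousOn (fun μ : ℝ => ((μ : ℂ) - lam)⁻¹) (uIcc a b) :=
    (continuous_ofReal.continuousOn.sub continuousOn_const).inv₀ hlam
  have hreg : IntervalIntegrable (fun μ : ℝ => (f μ - w) / (μ - lam)) volume a b :=
    ((hf.sub continuousOn_const).div (continuous_ofReal.continuousOn.sub continuousOn_const)
      hlam).intervalIntegrable
  rw [← intervalIntegral.integral_const_mul, ← integral_add hreg
    (hinv.intervalIntegrable.const_mul (w - v))]
  exact integral_congr fun μ _ => by ring

theorem DifferentiableOn.exists_lipschitzOnWith_comp_ofReal {U : Set ℂ} {ν : ℂ → ℂ}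
    {s : Set ℝ} (hU : IsOpen U) (hν : DifferentiableOn ℂ ν U)
    (hsU : (fun x : ℝ => (x : ℂ)) '' s ⊆ U) (hs : Convex ℝ s) (hs' : IsCompact s) :
    ∃ L, LipschitzOnWith L (fun x : ℝ => ν x) s :=
  (((hν.contDiffOn (n := 1) hU).restrict_scalars ℝ).comp ofRealCLM.contDiff.contDiffOn
    fun x hx => hsU ⟨x, hx, rfl⟩).exists_lipschitzOnWith one_ne_zero hs hs'

section Endpoint

variable {a b : ℝ} {U : Set ℂ} {ν : ℂ → ℂ}

theorem exists_eventually_norm_integral_sub_div_le_right (hab : a < b) (hU : IsOpen U)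
    (hUab : (fun x : ℝ => (x : ℂ)) '' Icc a b ⊆ U) (hν : DifferentiableOn ℂ ν U) :
    ∃ C, ∀ᶠ lam in 𝓝 (b : ℂ), lam ∉ (fun x : ℝ => (x : ℂ)) '' Icc a b →
      ‖∫ μ in a..b, (ν μ - ν b) / (μ - lam)‖ ≤ C := by
  obtain ⟨L, hL⟩ := hν.exists_lipschitzOnWith_comp_ofReal hU hUab (convex_Icc a b) isCompact_Icc
  have hba : (b - a : ℂ) ∈ slitPlane := by
    rw [← ofReal_sub]; exact ofReal_mem_slitPlane.2 (sub_pos.2 hab)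
  have hlog_a : ∀ᶠ lam in 𝓝 (b : ℂ), ‖log (lam - a)‖ < ‖log (b - a)‖ + 1 :=
    (((continuous_id.sub continuous_const).continuousAt.clog hba).norm).eventually
      (gt_mem_nhds (lt_add_one _))
  have hre : ∀ᶠ lam in 𝓝 (b : ℂ), a < lam.re :=
    (continuous_re.tendsto (b : ℂ)).eventually (lt_mem_nhds (by simpa using hab))
  have hnear : ∀ᶠ lam in 𝓝 (b : ℂ), ‖lam - (b : ℂ)‖ ≤ 1 :=
    Metric.eventually_nhds_iff.2 ⟨1, one_pos, fun lam h => by rw [← dist_eq_norm]; exact h.le⟩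
  refine ⟨L * (b - a) + L * (1 + Real.pi) + L * (‖log (b - a)‖ + 1), ?_⟩
  filter_upwards [hlog_a, hre, hnear] with lam hlog_a hre hnear hlam
  have hsub : ∀ μ ∈ uIcc a b, (μ : ℂ) - lam ≠ 0 := by
    rw [uIcc_of_le hab.le]
    rintro μ hμ h
    exact hlam ⟨μ, hμ, sub_eq_zero.1 h⟩
  set c : ℝ := (projIcc a b hab.le lam.re : ℝ)
  have hc : c ∈ Icc a b := Subtype.prop _
  have hcb : ‖ν c - ν b‖ ≤ L * ‖lam - b‖ := by
    grw [hL.norm_sub_le hc (right_mem_Icc.2 hab.le)]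
    gcongr
    calc ‖c - b‖ = |c - (projIcc a b hab.le b : ℝ)| := by rw [projIcc_right, Real.norm_eq_abs]
      _ ≤ |lam.re - b| := abs_projIcc_sub_projIcc _
      _ ≤ ‖lam - b‖ := by simpa using abs_re_le_norm (lam - b)
  have hμc : ∀ μ ∈ uIcc a b, ‖ν μ - ν c‖ ≤ L * ‖(μ : ℂ) - lam‖ := by
    rw [uIcc_of_le hab.le]
    intro μ hμ
    grw [hL.norm_sub_le hμ hc]
    gcongr
    calc ‖μ - c‖ = |(projIcc a b hab.le μ : ℝ) - c| := by rw [projIcc_of_mem _ hμ, Real.norm_eq_abs]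
      _ ≤ |μ - lam.re| := abs_projIcc_sub_projIcc _
      _ ≤ ‖(μ : ℂ) - lam‖ := by simpa using abs_re_le_norm ((μ : ℂ) - lam)
  have hcont : ContinuousOn (fun μ : ℝ => ν μ) (uIcc a b) := by
    rw [uIcc_of_le hab.le]; exact hL.continuousOn
  rw [integral_sub_div_ofReal_sub_eq hcont hsub _ (ν c), integral_inv_ofReal_sub_eq_log_sub
    fun x hx => sub_ofReal_mem_slitPlane hre hlam (uIcc_of_le hab.le ▸ hx).2]
  calc _ ≤ ‖∫ μ in a..b, (ν μ - ν c) / (μ - lam)‖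
        + ‖ν c - ν b‖ * (‖log (lam - b)‖ + ‖log (lam - a)‖) := by
        grw [norm_add_le, norm_mul, norm_sub_le (log _)]
    _ ≤ L * (b - a) + L * ‖lam - b‖ * (‖log (lam - b)‖ + (‖log (b - a)‖ + 1)) := by
        gcongr
        simpa [abs_of_pos (sub_pos.2 hab)] using norm_integral_div_ofReal_sub_le L.2 hμc
    _ = L * (b - a) + L * (‖lam - b‖ * ‖log (lam - b)‖)
          + L * (‖lam - b‖ * (‖log (b - a)‖ + 1)) := by ring
    _ ≤ _ := by grw [norm_mul_norm_log_le hnear, hnear, one_mul]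

theorem exists_eventually_norm_integral_sub_div_le_left (hab : a < b) (hU : IsOpen U)
    (hUab : (fun x : ℝ => (x : ℂ)) '' Icc a b ⊆ U) (hν : DifferentiableOn ℂ ν U) :
    ∃ C, ∀ᶠ lam in 𝓝 (a : ℂ), lam ∉ (fun x : ℝ => (x : ℂ)) '' Icc a b →
      ‖∫ μ in a..b, (ν μ - ν a) / (μ - lam)‖ ≤ C := by
  have hUab' : (fun x : ℝ => (x : ℂ)) '' Icc (-b) (-a) ⊆ Neg.neg ⁻¹' U := by
    rintro _ ⟨x, hx, rfl⟩
    exact hUab ⟨-x, neg_mem_Icc_iff.2 hx, by simp⟩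
  obtain ⟨C, hC⟩ := exists_eventually_norm_integral_sub_div_le_right (neg_lt_neg hab)
    (hU.preimage continuous_neg) hUab' (hν.comp (differentiableOn_neg _) (mapsTo_preimage _ _))
  refine ⟨C, ?_⟩
  filter_upwards [(continuous_neg.tendsto' (a : ℂ) _ (by simp)).eventually hC] with lam hlam hlamK
  have hK : -lam ∉ (fun x : ℝ => (x : ℂ)) '' Icc (-b) (-a) := by
    rintro ⟨x, hx, hx'⟩
    exact hlamK ⟨-x, neg_mem_Icc_iff.2 hx, by simp [hx']⟩
  convert hlam hK using 1
  rw [← integral_comp_neg, ← norm_neg, ← intervalIntegral.integral_neg]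
  congr 2 with μ
  simp only [Function.comp_apply, ofReal_neg, neg_neg]
  rw [← neg_sub', div_neg]

end Endpoint

theorem exists_pos_bound_of_eventually {E F : Type*} [SeminormedAddCommGroup E]
    [SeminormedAddCommGroup F] {f : E → F} {z : E} {P : E → Prop}
    (h : ∃ C, ∀ᶠ y in 𝓝 z, P y → ‖f y‖ ≤ C) :
    ∃ C > (0 : ℝ), ∃ δ > (0 : ℝ), ∀ y, P y → ‖y - z‖ < δ → ‖f y‖ ≤ C := by
  obtain ⟨C, hC⟩ := h
  obtain ⟨δ, hδ, hCδ⟩ := Metric.eventually_nhds_iff.1 hC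
  exact ⟨max C 1, by positivity, δ, hδ, fun y hy hyδ =>
    (hCδ (by rwa [dist_eq_norm]) hy).trans (le_max_left _ _)⟩

/-- for `ν` holomorphic in a neighbourhood of `[a,b]`, the regularised
Cauchy integrals `∫_a^b (ν(μ)-ν(b))/(μ-λ) dμ` and `∫_a^b (ν(μ)-ν(a))/(μ-λ) dμ` stay
bounded as `λ ∉ [a,b]` approaches the corresponding endpoint. -/
theorem stmt19 (a b : ℝ) (hab : a < b) (U : Set ℂ) (hU : IsOpen U)
    (hUab : (fun x : ℝ => (x : ℂ)) '' Set.Icc a b ⊆ U)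
    (ν : ℂ → ℂ) (hν : DifferentiableOn ℂ ν U) :
    (∃ C > (0 : ℝ), ∃ δ > (0 : ℝ),
      ∀ lam : ℂ, lam ∉ (fun x : ℝ => (x : ℂ)) '' Set.Icc a b →
        0 < ‖lam - (b : ℂ)‖ → ‖lam - (b : ℂ)‖ < δ →
        ‖∫ μ in a..b, (ν μ - ν (b : ℂ)) / (μ - lam)‖ ≤ C) ∧
    (∃ C > (0 : ℝ), ∃ δ > (0 : ℝ),
      ∀ lam : ℂ, lam ∉ (fun x : ℝ => (x : ℂ)) '' Set.Icc a b →
        0 < ‖lam - (a : ℂ)‖ → ‖lam - (a : ℂ)‖ < δ →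
        ‖∫ μ in a..b, (ν μ - ν (a : ℂ)) / (μ - lam)‖ ≤ C) := by
  constructor
  · obtain ⟨C, hC, δ, hδ, h⟩ := exists_pos_bound_of_eventually
      (exists_eventually_norm_integral_sub_div_le_right hab hU hUab hν)
    exact ⟨C, hC, δ, hδ, fun lam hlam _ hlamδ => h lam hlam hlamδ⟩
  · obtain ⟨C, hC, δ, hδ, h⟩ := exists_pos_bound_of_eventually
      (exists_eventually_norm_integral_sub_div_le_left hab hU hUab hν)
    exact ⟨C, hC, δ, hδ, fun lam hlam _ hlamδ => h lam hlam hlamδ⟩
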